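/- Let q ≥ 1 and g be holomorphic on the unit disc. Then sup over z in D of (1−|z|²)·q|g(z)|^{q−1}|g'(z)| equals sup over distinct w, z in D of ||g(w)|^q − |g(z)|^q| / β(w,z), where β is the hyperbolic distance on the disc. -/

import Mathlib

/-!
The density `(1 - |z|²) q |g z|^(q-1) |g' z|` is unchanged when `g` is replaced by `g ∘ φ_w`, and
`β(w, z) = artanh |φ_w z|`. So if the density is at most `s`, then along the radius `t ↦ t a`,
`a = φ_w z`, the function `|g ∘ φ_w|^q` grows no faster than `s artanh (t |a|)`, whose derivative
is `s |a| / (1 - t² |a|²)`; hence `||g w|^q - |g z|^q| ≤ s β(w, z)`. Conversely, pick a unit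
direction `e` such that `g'(z) e` points the same way as `g z`: along `z + t e` the function
`|g|^q` grows at the rate `q |g z|^(q-1) |g' z|` and `β(z + t e, z)` at the rate `1 / (1 - |z|²)`,
so the difference quotients tend to the density at `z`.
-/

open MeasureTheory Metric
open scoped ENNReal

/-- The hyperbolic distance on the unit disc:
`β(w,z) = (1/2) log((1+|φ_w(z)|)/(1−|φ_w(z)|))` with `φ_w(z) = (w−z)/(1−conj w · z)`. -/
noncomputable def hypDist (w z : ℂ) : ℝ :=
  (1 / 2) * Real.log
    ((1 + ‖(w - z) / (1 - (starRingEnd ℂ) w * z)‖)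
      / (1 - ‖(w - z) / (1 - (starRingEnd ℂ) w * z)‖))

open Filter Set Topology ComplexConjugate

theorem Real.hasDerivAt_artanh {x : ℝ} (hx : x ∈ Ioo (-1) 1) :
    HasDerivAt Real.artanh (1 - x ^ 2)⁻¹ x := by
  have h₁ : 0 < 1 + x := by linarith [hx.1]
  have h₂ : 0 < 1 - x := by linarith [hx.2]
  have hlog : HasDerivAt (fun y => 1 / 2 * (Real.log (1 + y) - Real.log (1 - y)))
      (1 / 2 * (1 / (1 + x) - -1 / (1 - x))) x :=
    ((((hasDerivAt_id x).const_add 1).log h₁.ne').sub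
      (((hasDerivAt_id x).const_sub 1).log h₂.ne')).const_mul _
  refine (hlog.congr_deriv ?_).congr_of_eventuallyEq ?_
  · rw [show 1 - x ^ 2 = (1 + x) * (1 - x) by ring]
    field_simp
    ring
  · filter_upwards [Ioo_mem_nhds hx.1 hx.2] with y hy
    rw [Real.artanh_eq_half_log (Ioo_subset_Icc_self hy),
      Real.log_div (by linarith [hy.1]) (by linarith [hy.2])]

theorem hasDerivWithinAt_Ici_norm_of_sameRay {E : Type*} [NormedAddCommGroup E]
    [NormedSpace ℝ E] {f : ℝ → E} {f' : E} {t : ℝ} (hf : HasDerivWithinAt f f' (Ici t) t)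
    (hray : SameRay ℝ (f t) f') : HasDerivWithinAt (fun s => ‖f s‖) ‖f'‖ (Ici t) t := by
  refine .of_isLittleO <|
    (Asymptotics.IsBigO.of_bound' ?_).trans_isLittleO hf.isLittleO.norm_left
  filter_upwards [self_mem_nhdsWithin] with s (hs : t ≤ s)
  have hnorm : ‖f t + (s - t) • f'‖ = ‖f t‖ + (s - t) • ‖f'‖ := by
    rw [(hray.nonneg_smul_right (sub_nonneg.2 hs)).norm_add, norm_smul,
      Real.norm_of_nonneg (sub_nonneg.2 hs), smul_eq_mul]
  rw [norm_norm, Real.norm_eq_abs, sub_sub, ← hnorm, sub_sub]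
  exact abs_norm_sub_norm_le _ _

theorem tendsto_sub_div_sub_of_hasDerivWithinAt_Ici {f g : ℝ → ℝ} {f' g' x : ℝ}
    (hf : HasDerivWithinAt f f' (Ici x) x) (hg : HasDerivWithinAt g g' (Ici x) x)
    (hg' : g' ≠ 0) :
    Tendsto (fun y => (f y - f x) / (g y - g x)) (𝓝[>] x) (𝓝 (f' / g')) := by
  rw [hasDerivWithinAt_iff_tendsto_slope, Ici_sdiff_left] at hf hg
  refine (hf.div hg hg').congr' ?_
  filter_upwards [self_mem_nhdsWithin] with y (hy : x < y)
  simp only [Pi.div_apply, slope_def_field]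
  field_simp [(sub_pos.2 hy).ne']

theorem norm_sub_le_of_norm_deriv_le_deriv_boundary {E : Type*} [NormedAddCommGroup E]
    [NormedSpace ℝ E] {f f' : ℝ → E} {B B' : ℝ → ℝ} {a b : ℝ} (hab : a ≤ b)
    (hf : ∀ x ∈ Icc a b, HasDerivAt f (f' x) x) (hB : ∀ x ∈ Icc a b, HasDerivAt B (B' x) x)
    (bound : ∀ x ∈ Ico a b, ‖f' x‖ ≤ B' x) : ‖f b - f a‖ ≤ B b - B a :=
  image_norm_le_of_norm_deriv_right_le_deriv_boundary' (f := fun x => f x - f a)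
    (B := fun x => B x - B a)
    (fun x hx => ((hf x hx).sub_const _).continuousAt.continuousWithinAt)
    (fun x hx => ((hf x (Ico_subset_Icc_self hx)).sub_const _).hasDerivWithinAt)
    (by simp) (fun x hx => ((hB x hx).sub_const _).continuousAt.continuousWithinAt)
    (fun x hx => ((hB x (Ico_subset_Icc_self hx)).sub_const _).hasDerivWithinAt)
    bound (right_mem_Icc.2 hab)

theorem norm_smul_inner_le_mul_rpow {E : Type*} [NormedAddCommGroup E] [InnerProductSpace ℝ E]
    {q : ℝ} (hq : 1 ≤ q) (x v : E) :
    ‖(q * ‖x‖ ^ (q - 2)) • inner ℝ x v‖ ≤ q * ‖x‖ ^ (q - 1) * ‖v‖ := by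
  rcases eq_or_ne x 0 with rfl | hx
  · simp only [norm_zero, inner_zero_left, smul_eq_mul, mul_zero]
    positivity
  have hpow : ‖x‖ ^ (q - 2) * ‖x‖ = ‖x‖ ^ (q - 1) := by
    rw [← Real.rpow_add_one (norm_ne_zero_iff.2 hx)]
    ring_nf
  calc ‖(q * ‖x‖ ^ (q - 2)) • inner ℝ x v‖
      = q * ‖x‖ ^ (q - 2) * |inner ℝ x v| := by
        rw [norm_smul, Real.norm_eq_abs, Real.norm_eq_abs, abs_of_nonneg (by positivity)]
    _ ≤ q * ‖x‖ ^ (q - 2) * (‖x‖ * ‖v‖) := by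
        gcongr
        exact abs_real_inner_le_norm x v
    _ = q * ‖x‖ ^ (q - 1) * ‖v‖ := by rw [← hpow]; ring

theorem abs_norm_rpow_sub_le_of_deriv_boundary {E : Type*} [NormedAddCommGroup E]
    [InnerProductSpace ℝ E] {q : ℝ} (hq : 1 ≤ q) {f f' : ℝ → E} {B B' : ℝ → ℝ} {a b : ℝ}
    (hab : a ≤ b) (hf : ∀ x ∈ Icc a b, HasDerivAt f (f' x) x)
    (hB : ∀ x ∈ Icc a b, HasDerivAt B (B' x) x)
    (bound : ∀ x ∈ Ico a b, q * ‖f x‖ ^ (q - 1) * ‖f' x‖ ≤ B' x) :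
    |‖f b‖ ^ q - ‖f a‖ ^ q| ≤ B b - B a := by
  rcases hq.eq_or_lt with rfl | hq'
  · simp only [Real.rpow_one]
    refine (abs_norm_sub_norm_le _ _).trans
      (norm_sub_le_of_norm_deriv_le_deriv_boundary hab hf hB fun x hx => ?_)
    simpa using bound x hx
  · refine norm_sub_le_of_norm_deriv_le_deriv_boundary hab
      (fun x hx => ((hasFDerivAt_norm_rpow (f x) hq').comp_hasDerivAt x (hf x hx))) hB
      fun x hx => (norm_smul_inner_le_mul_rpow hq _ _).trans (bound x hx)

noncomputable def moebius (w z : ℂ) : ℂ := (w - z) / (1 - conj w * z)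

theorem sq_norm_one_sub_conj_mul_sub_sq_norm_sub (w z : ℂ) :
    ‖1 - conj w * z‖ ^ 2 - ‖w - z‖ ^ 2 = (1 - ‖w‖ ^ 2) * (1 - ‖z‖ ^ 2) := by
  simp only [Complex.sq_norm, Complex.normSq_apply, Complex.sub_re, Complex.sub_im,
    Complex.mul_re, Complex.mul_im, Complex.conj_re, Complex.conj_im, Complex.one_re,
    Complex.one_im]
  ring

theorem hasDerivAt_moebius {w z : ℂ} (hd : 1 - conj w * z ≠ 0) :
    HasDerivAt (moebius w) ((conj w * w - 1) / (1 - conj w * z) ^ 2) z := by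
  refine (((hasDerivAt_id z).const_sub w).div
    (((hasDerivAt_id z).const_mul (conj w)).const_sub 1) hd).congr_deriv ?_
  simp only [id]
  ring

section UnitDisc

variable {w z : ℂ}

theorem one_sub_conj_mul_ne_zero (hw : w ∈ ball (0 : ℂ) 1) (hz : z ∈ ball (0 : ℂ) 1) :
    1 - conj w * z ≠ 0 := by
  rw [mem_ball_zero_iff] at hw hz
  refine sub_ne_zero.2 fun h => ?_
  have : ‖conj w * z‖ < 1 := by
    rw [norm_mul, Complex.norm_conj]
    nlinarith [norm_nonneg w, norm_nonneg z]
  simp [← h] at this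

theorem moebius_mem_ball (hw : w ∈ ball (0 : ℂ) 1) (hz : z ∈ ball (0 : ℂ) 1) :
    moebius w z ∈ ball (0 : ℂ) 1 := by
  have key := sq_norm_one_sub_conj_mul_sub_sq_norm_sub w z
  have hd := norm_pos_iff.2 (one_sub_conj_mul_ne_zero hw hz)
  rw [mem_ball_zero_iff] at hw hz ⊢
  rw [moebius, norm_div, div_lt_one hd]
  have : 0 < (1 - ‖w‖ ^ 2) * (1 - ‖z‖ ^ 2) := by
    apply mul_pos <;> nlinarith [norm_nonneg w, norm_nonneg z]
  nlinarith [norm_nonneg (w - z)]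

theorem moebius_moebius (hw : w ∈ ball (0 : ℂ) 1) (hz : z ∈ ball (0 : ℂ) 1) :
    moebius w (moebius w z) = z := by
  have hd := one_sub_conj_mul_ne_zero hw hz
  have hww : 1 - conj w * w ≠ 0 := one_sub_conj_mul_ne_zero hw hw
  have hnum : w - moebius w z = z * (1 - conj w * w) / (1 - conj w * z) := by
    rw [moebius, eq_div_iff hd, sub_mul, div_mul_cancel₀ _ hd]
    ring
  have hden : 1 - conj w * moebius w z = (1 - conj w * w) / (1 - conj w * z) := by
    rw [moebius, eq_div_iff hd, sub_mul, mul_div_assoc', div_mul_cancel₀ _ hd]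
    ring
  rw [moebius, hnum, hden, div_div_div_cancel_right₀ hd, mul_div_cancel_right₀ _ hww]

theorem hypDist_eq_artanh (hw : w ∈ ball (0 : ℂ) 1) (hz : z ∈ ball (0 : ℂ) 1) :
    hypDist w z = Real.artanh ‖moebius w z‖ := by
  have h := mem_ball_zero_iff.1 (moebius_mem_ball hw hz)
  rw [Real.artanh_eq_half_log ⟨by linarith [norm_nonneg (moebius w z)], h.le⟩]
  rfl

theorem hypDist_pos (hw : w ∈ ball (0 : ℂ) 1) (hz : z ∈ ball (0 : ℂ) 1) (hne : w ≠ z) :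
    0 < hypDist w z := by
  rw [hypDist_eq_artanh hw hz]
  refine Real.artanh_pos ⟨?_, mem_ball_zero_iff.1 (moebius_mem_ball hw hz)⟩
  exact norm_pos_iff.2 (div_ne_zero (sub_ne_zero.2 hne) (one_sub_conj_mul_ne_zero hw hz))

theorem one_sub_sq_norm_mul_norm_deriv_moebius (hw : w ∈ ball (0 : ℂ) 1)
    (hz : z ∈ ball (0 : ℂ) 1) :
    (1 - ‖z‖ ^ 2) * ‖deriv (moebius w) z‖ = 1 - ‖moebius w z‖ ^ 2 := by
  have hd := one_sub_conj_mul_ne_zero hw hz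
  have hw' : ‖w‖ ^ 2 ≤ 1 := by nlinarith [mem_ball_zero_iff.1 hw, norm_nonneg w]
  have hnum : ‖conj w * w - 1‖ = 1 - ‖w‖ ^ 2 := by
    rw [Complex.conj_mul', ← Complex.ofReal_pow, ← Complex.ofReal_one, ← Complex.ofReal_sub,
      Complex.norm_real, Real.norm_eq_abs, abs_of_nonpos (by linarith)]
    ring
  have key := sq_norm_one_sub_conj_mul_sub_sq_norm_sub w z
  rw [(hasDerivAt_moebius hd).deriv, moebius, norm_div, norm_div, norm_pow, hnum, div_pow]
  field_simp
  linear_combination -key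

end UnitDisc

noncomputable def blochDensity (q : ℝ) (g : ℂ → ℂ) (z : ℂ) : ℝ :=
  (1 - ‖z‖ ^ 2) * (q * ‖g z‖ ^ (q - 1) * ‖deriv g z‖)

theorem blochDensity_comp_moebius {q : ℝ} {g : ℂ → ℂ} {w z : ℂ} (hw : w ∈ ball (0 : ℂ) 1)
    (hz : z ∈ ball (0 : ℂ) 1) (hg : DifferentiableAt ℂ g (moebius w z)) :
    blochDensity q (g ∘ moebius w) z = blochDensity q g (moebius w z) := by
  have hm := (hasDerivAt_moebius (one_sub_conj_mul_ne_zero hw hz)).differentiableAt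
  simp only [blochDensity, Function.comp_apply, deriv_comp z hg hm, norm_mul,
    ← one_sub_sq_norm_mul_norm_deriv_moebius hw hz]
  ring

theorem abs_norm_rpow_sub_le_mul_artanh {q s : ℝ} (hq : 1 ≤ q) {h : ℂ → ℂ}
    (hh : DifferentiableOn ℂ h (ball 0 1)) (hs : ∀ u ∈ ball (0 : ℂ) 1, blochDensity q h u ≤ s)
    {a : ℂ} (ha : a ∈ ball 0 1) :
    |‖h a‖ ^ q - ‖h 0‖ ^ q| ≤ s * Real.artanh ‖a‖ := by
  have ha' : ‖a‖ < 1 := mem_ball_zero_iff.1 ha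
  have hnorm : ∀ t ∈ Icc (0 : ℝ) 1, ‖(t : ℂ) * a‖ = t * ‖a‖ := fun t ht => by
    rw [norm_mul, Complex.norm_real, Real.norm_of_nonneg ht.1]
  have hlt : ∀ t ∈ Icc (0 : ℝ) 1, t * ‖a‖ < 1 := fun t ht => by
    nlinarith [ht.2, norm_nonneg a]
  have hmem : ∀ t ∈ Icc (0 : ℝ) 1, (t : ℂ) * a ∈ ball (0 : ℂ) 1 := fun t ht => by
    rw [mem_ball_zero_iff, hnorm t ht]
    exact hlt t ht
  have hf : ∀ t ∈ Icc (0 : ℝ) 1,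
      HasDerivAt (fun t : ℝ => h (t * a)) (deriv h (t * a) * a) t := fun t ht =>
    ((hh.differentiableAt (isOpen_ball.mem_nhds (hmem t ht))).hasDerivAt.comp (t : ℂ)
      (hasDerivAt_mul_const a)).comp_ofReal
  have hB : ∀ t ∈ Icc (0 : ℝ) 1, HasDerivAt (fun t => s * Real.artanh (t * ‖a‖))
      (s * ((1 - (t * ‖a‖) ^ 2)⁻¹ * ‖a‖)) t := fun t ht => by
    have hartanh := Real.hasDerivAt_artanh (x := t * ‖a‖)
      ⟨by nlinarith [ht.1, norm_nonneg a], hlt t ht⟩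
    exact (hartanh.comp t (hasDerivAt_mul_const ‖a‖)).const_mul s
  have bound : ∀ t ∈ Ico (0 : ℝ) 1, q * ‖h (t * a)‖ ^ (q - 1) * ‖deriv h (t * a) * a‖
      ≤ s * ((1 - (t * ‖a‖) ^ 2)⁻¹ * ‖a‖) := fun t ht => by
    have ht' := Ico_subset_Icc_self ht
    have hpos : 0 < 1 - (t * ‖a‖) ^ 2 := by
      nlinarith [hlt t ht', mul_nonneg ht.1 (norm_nonneg a)]
    have hst := hs _ (hmem t ht')
    rw [blochDensity, hnorm t ht'] at hst
    rw [norm_mul, ← mul_assoc, ← mul_assoc]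
    refine mul_le_mul_of_nonneg_right ?_ (norm_nonneg a)
    rwa [le_mul_inv_iff₀ hpos, mul_comm]
  simpa [Real.artanh_zero] using
    abs_norm_rpow_sub_le_of_deriv_boundary hq zero_le_one hf hB bound

theorem abs_norm_rpow_sub_le_mul_hypDist {q s : ℝ} (hq : 1 ≤ q) {g : ℂ → ℂ}
    (hg : DifferentiableOn ℂ g (ball 0 1)) (hs : ∀ u ∈ ball (0 : ℂ) 1, blochDensity q g u ≤ s)
    {w z : ℂ} (hw : w ∈ ball (0 : ℂ) 1) (hz : z ∈ ball (0 : ℂ) 1) :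
    |‖g w‖ ^ q - ‖g z‖ ^ q| ≤ s * hypDist w z := by
  have hgm : ∀ u ∈ ball (0 : ℂ) 1, DifferentiableAt ℂ g (moebius w u) := fun u hu =>
    hg.differentiableAt (isOpen_ball.mem_nhds (moebius_mem_ball hw hu))
  have hh : DifferentiableOn ℂ (g ∘ moebius w) (ball 0 1) := fun u hu =>
    ((hgm u hu).comp u (hasDerivAt_moebius
      (one_sub_conj_mul_ne_zero hw hu)).differentiableAt).differentiableWithinAt
  have hs' : ∀ u ∈ ball (0 : ℂ) 1, blochDensity q (g ∘ moebius w) u ≤ s := fun u hu => by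
    rw [blochDensity_comp_moebius hw hu (hgm u hu)]
    exact hs _ (moebius_mem_ball hw hu)
  have key := abs_norm_rpow_sub_le_mul_artanh hq hh hs' (moebius_mem_ball hw hz)
  rwa [Function.comp_apply, Function.comp_apply, moebius_moebius hw hz,
    show moebius w 0 = w by simp [moebius], abs_sub_comm, ← hypDist_eq_artanh hw hz] at key

theorem exists_norm_eq_one_sameRay_mul (a b : ℂ) : ∃ e : ℂ, ‖e‖ = 1 ∧ SameRay ℝ a (b * e) := by
  rcases eq_or_ne a 0 with rfl | ha
  · exact ⟨1, by simp, SameRay.zero_left _⟩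
  rcases eq_or_ne b 0 with rfl | hb
  · exact ⟨1, by simp, by simp⟩
  have hab : ‖a / b‖ ≠ 0 := by simp [ha, hb]
  refine ⟨a / b / ‖a / b‖, by simp [ha, hb], ?_⟩
  have : b * (a / b / ‖a / b‖) = ‖a / b‖⁻¹ • a := by
    rw [Complex.real_smul, Complex.ofReal_inv]
    field_simp
  rw [this]
  exact SameRay.sameRay_nonneg_smul_right a (by positivity)

theorem eventually_add_ofReal_mul_mem_ball {z : ℂ} (hz : z ∈ ball (0 : ℂ) 1) (e : ℂ) :
    ∀ᶠ t : ℝ in 𝓝 0, z + t * e ∈ ball (0 : ℂ) 1 :=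
  (continuous_const.add (Complex.continuous_ofReal.mul continuous_const)).continuousAt
    |>.preimage_mem_nhds (by simpa using isOpen_ball.mem_nhds hz)

theorem hasDerivAt_moebius_add_ofReal_mul {z : ℂ} (hd : 1 - conj z * z ≠ 0) (e : ℂ) :
    HasDerivAt (fun t : ℝ => moebius (z + t * e) z) (e / (1 - conj z * z)) 0 := by
  have hc : HasDerivAt (fun c : ℂ => c * e / (1 - (conj z + c * conj e) * z))
      (e / (1 - conj z * z)) 0 := by
    refine ((hasDerivAt_mul_const e).div (((hasDerivAt_mul_const (conj e)).const_add
      (conj z)).mul_const z |>.const_sub 1) (by simpa using hd)).congr_deriv ?_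
    simp only [zero_mul, add_zero, sub_zero]
    field_simp
  refine (hc.comp_ofReal (z := 0)).congr_of_eventuallyEq (Eventually.of_forall fun t => ?_)
  simp [moebius]

theorem hasDerivWithinAt_hypDist_add_ofReal_mul {z e : ℂ} (hz : z ∈ ball (0 : ℂ) 1)
    (he : ‖e‖ = 1) :
    HasDerivWithinAt (fun t : ℝ => hypDist (z + t * e) z) (1 - ‖z‖ ^ 2)⁻¹ (Ici 0) 0 := by
  have hz' : 0 < 1 - ‖z‖ ^ 2 := by nlinarith [mem_ball_zero_iff.1 hz, norm_nonneg z]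
  have hd : 1 - conj z * z ≠ 0 := one_sub_conj_mul_ne_zero hz hz
  have hdz : 1 - conj z * z = ((1 - ‖z‖ ^ 2 : ℝ) : ℂ) := by
    rw [Complex.conj_mul']
    push_cast
    ring
  have hnorm : HasDerivWithinAt (fun t : ℝ => ‖moebius (z + t * e) z‖) (1 - ‖z‖ ^ 2)⁻¹
      (Ici 0) 0 := by
    have := hasDerivWithinAt_Ici_norm_of_sameRay
      (hasDerivAt_moebius_add_ofReal_mul hd e).hasDerivWithinAt (by simp [moebius])
    rwa [norm_div, he, hdz, Complex.norm_real, Real.norm_of_nonneg hz'.le, one_div] at this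
  have hartanh := Real.hasDerivAt_artanh (x := 0) ⟨by norm_num, by norm_num⟩
  refine ((hartanh.comp_hasDerivWithinAt_of_eq 0 hnorm (by simp [moebius])).congr_deriv
    (by simp)).congr_of_eventuallyEq ?_ (by simp [hypDist_eq_artanh hz hz])
  filter_upwards [nhdsWithin_le_nhds (eventually_add_ofReal_mul_mem_ball hz e)] with t ht
  exact hypDist_eq_artanh ht hz

theorem hasDerivWithinAt_norm_rpow_comp_add_ofReal_mul {q : ℝ} (hq : 1 ≤ q) {g : ℂ → ℂ}
    {z e : ℂ} (hg : DifferentiableAt ℂ g z) (he : ‖e‖ = 1)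
    (hray : SameRay ℝ (g z) (deriv g z * e)) :
    HasDerivWithinAt (fun t : ℝ => ‖g (z + t * e)‖ ^ q) (q * ‖g z‖ ^ (q - 1) * ‖deriv g z‖)
      (Ici 0) 0 := by
  have hf : HasDerivAt (fun t : ℝ => g (z + t * e)) (deriv g z * e) 0 := by
    have hg' : HasDerivAt g (deriv g z) (z + 0 * e) := by simpa using hg.hasDerivAt
    simpa using (hg'.comp (0 : ℂ) ((hasDerivAt_mul_const e).const_add z)).comp_ofReal
  have hnorm := hasDerivWithinAt_Ici_norm_of_sameRay hf.hasDerivWithinAt (by simpa using hray)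
  refine (hnorm.rpow_const (Or.inr hq)).congr_deriv ?_
  simp only [Complex.norm_mul, he, mul_one, Complex.ofReal_zero, zero_mul, add_zero]
  ring

theorem ofReal_blochDensity_le {q : ℝ} (hq : 1 ≤ q) {g : ℂ → ℂ} {z : ℂ}
    (hz : z ∈ ball (0 : ℂ) 1) (hg : DifferentiableAt ℂ g z) {S : ℝ≥0∞}
    (hS : ∀ w ∈ ball (0 : ℂ) 1, w ≠ z →
      ENNReal.ofReal (|‖g w‖ ^ q - ‖g z‖ ^ q| / hypDist w z) ≤ S) :
    ENNReal.ofReal (blochDensity q g z) ≤ S := by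
  obtain ⟨e, he, hray⟩ := exists_norm_eq_one_sameRay_mul (g z) (deriv g z)
  have hz' : (1 - ‖z‖ ^ 2)⁻¹ ≠ 0 :=
    inv_ne_zero (by nlinarith [mem_ball_zero_iff.1 hz, norm_nonneg z])
  have hlim : Tendsto (fun t : ℝ => (‖g (z + t * e)‖ ^ q - ‖g z‖ ^ q) / hypDist (z + t * e) z)
      (𝓝[>] 0) (𝓝 (blochDensity q g z)) := by
    convert tendsto_sub_div_sub_of_hasDerivWithinAt_Ici
      (hasDerivWithinAt_norm_rpow_comp_add_ofReal_mul hq hg he hray)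
      (hasDerivWithinAt_hypDist_add_ofReal_mul hz he) hz' using 2 with t
    · simp [hypDist_eq_artanh hz hz, moebius]
    · rw [blochDensity, div_inv_eq_mul, mul_comm]
  refine (ENNReal.ofReal_le_ofReal (le_abs_self _)).trans <|
    le_of_tendsto ((ENNReal.continuous_ofReal.tendsto _).comp hlim.abs) ?_
  filter_upwards [nhdsWithin_le_nhds (eventually_add_ofReal_mul_mem_ball hz e),
    self_mem_nhdsWithin] with t hmem (ht : 0 < t)
  have hne : z + t * e ≠ z := by simp [ht.ne', ← norm_ne_zero_iff, he]
  simpa [abs_div, abs_of_pos (hypDist_pos hmem hz hne)] using hS _ hmem hne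

theorem ofReal_abs_sub_div_hypDist_le {q : ℝ} (hq : 1 ≤ q) {g : ℂ → ℂ}
    (hg : DifferentiableOn ℂ g (ball 0 1)) {S : ℝ≥0∞}
    (hS : ∀ u ∈ ball (0 : ℂ) 1, ENNReal.ofReal (blochDensity q g u) ≤ S) {w z : ℂ}
    (hw : w ∈ ball (0 : ℂ) 1) (hz : z ∈ ball (0 : ℂ) 1) (hne : w ≠ z) :
    ENNReal.ofReal (|‖g w‖ ^ q - ‖g z‖ ^ q| / hypDist w z) ≤ S := by
  rcases eq_or_ne S ⊤ with rfl | hS_top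
  · exact le_top
  have hs : ∀ u ∈ ball (0 : ℂ) 1, blochDensity q g u ≤ S.toReal := fun u hu =>
    (ENNReal.ofReal_le_iff_le_toReal hS_top).1 (hS u hu)
  rw [← ENNReal.ofReal_toReal hS_top]
  exact ENNReal.ofReal_le_ofReal <| (div_le_iff₀ (hypDist_pos hw hz hne)).2 <|
    abs_norm_rpow_sub_le_mul_hypDist hq hg hs hw hz

/-- For `q ≥ 1` and `g` holomorphic on the unit disc,
`sup_z (1−|z|²) q |g z|^{q−1} |g' z|` equals
`sup_{w ≠ z} ||g w|^q − |g z|^q| / β(w,z)`. -/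
theorem stmt_11 (q : ℝ) (hq : 1 ≤ q) (g : ℂ → ℂ)
    (hg : DifferentiableOn ℂ g (Metric.ball 0 1)) :
    (⨆ z : Metric.ball (0:ℂ) 1,
        ENNReal.ofReal ((1 - ‖(z : ℂ)‖ ^ 2) *
          (q * ‖g z‖ ^ (q - 1) * ‖deriv g z‖)))
    = ⨆ p : {p : ℂ × ℂ //
          p.1 ∈ Metric.ball (0:ℂ) 1 ∧ p.2 ∈ Metric.ball (0:ℂ) 1 ∧ p.1 ≠ p.2},
        ENNReal.ofReal
          (|‖g (p : ℂ × ℂ).1‖ ^ q - ‖g (p : ℂ × ℂ).2‖ ^ q|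
            / hypDist (p : ℂ × ℂ).1 (p : ℂ × ℂ).2) := by
  apply le_antisymm
  · refine iSup_le fun ⟨z, hz⟩ => ofReal_blochDensity_le hq hz
      (hg.differentiableAt (isOpen_ball.mem_nhds hz)) fun w hw hne => ?_
    exact le_iSup_of_le (⟨(w, z), hw, hz, hne⟩ : {p : ℂ × ℂ //
      p.1 ∈ ball (0:ℂ) 1 ∧ p.2 ∈ ball (0:ℂ) 1 ∧ p.1 ≠ p.2}) le_rfl
  · exact iSup_le fun ⟨⟨w, z⟩, hw, hz, hne⟩ => ofReal_abs_sub_div_hypDist_le hq hg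
      (fun u hu => le_iSup_of_le (⟨u, hu⟩ : ball (0 : ℂ) 1) le_rfl) hw hz hne
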